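/- arXiv:2310.06335 — 2 statements merged into one kernel-verified Lean document; each statement's English description precedes it below -/
import Mathlib

section
/- If any correct node BBCA-completes message m (i.e., receives Ready for m from 2f+1 distinct nodes), and correct nodes never send Ready after having probed-with-noadopt, then it is impossible that f+1 correct nodes probe and return noadopt. (BBCA Complete-Adopt, second form) -/
theorem bbca_complete_adopt_second {α : Type*} [DecidableEq α]
    (N F R S : Finset α) (f : ℕ) (ready noadopt : α → Prop)
    (hN : N.card = 3 * f + 1)
    (hF : F ⊆ N) (hFc : F.card ≤ f)
    (hmutex : ∀ p ∈ N, p ∉ F → ¬(ready p ∧ noadopt p))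
    (hR : R ⊆ N) (hRc : 2 * f + 1 ≤ R.card) (hready : ∀ p ∈ R, ready p)
    (hS : S ⊆ N \ F) (hSc : f + 1 ≤ S.card) (hnoadopt : ∀ p ∈ S, noadopt p) :
    False := by
  have hSN : S ⊆ N := hS.trans (Finset.sdiff_subset)
  have hU : (R ∪ S).card ≤ N.card := Finset.card_le_card (Finset.union_subset hR hSN)
  have h := Finset.card_union_add_card_inter R S
  have hpos : 0 < (R ∩ S).card := by omega
  obtain ⟨p, hp⟩ := Finset.card_pos.mp hpos
  have hpR := Finset.mem_inter.mp hp
  have hpS := hpR.2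
  have hpN := hSN hpS
  have hpF : p ∉ F := (Finset.mem_sdiff.mp (hS hpS)).2
  exact hmutex p hpN hpF ⟨hready p hpR.1, hnoadopt p hpS⟩
end

section
/- View synchronization chain bound: if the first correct node enters view v+1 at time t after GST via receiving 2f+1 noadopt new-view messages, the (f+1)-th correct noadopt sender sent at some time τ, message delay is at most Δ, and every correct node sends its own noadopt message upon receiving f+1 noadopt messages and enters the view upon receiving 2f+1, then all correct nodes enter view v+1 by time τ + 2Δ ≤ t + Δ. -/
theorem view_sync_bound {α : Type*} [DecidableEq α]
    (N F : Finset α) (f : ℕ) (s enter : α → ℝ) (Δ τ t : ℝ)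
    (hN : N.card = 3 * f + 1)
    (hF : F ⊆ N) (hFc : F.card ≤ f)
    -- at least f+1 correct nodes sent their noadopt message by time τ
    (hsent : ∃ S : Finset α, S ⊆ N \ F ∧ f + 1 ≤ S.card ∧ ∀ i ∈ S, s i ≤ τ)
    -- rule: once f+1 correct noadopt messages are sent by time T, every correct
    -- node receives them by T + Δ and sends its own noadopt message
    (hsendRule : ∀ T : ℝ,
      (∃ S : Finset α, S ⊆ N \ F ∧ f + 1 ≤ S.card ∧ ∀ i ∈ S, s i ≤ T) →
      ∀ p ∈ N \ F, s p ≤ T + Δ)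
    -- rule: once 2f+1 correct noadopt messages are sent by time T, every correct
    -- node receives 2f+1 of them by T + Δ and enters view v+1
    (henterRule : ∀ T : ℝ,
      (∃ R : Finset α, R ⊆ N \ F ∧ 2 * f + 1 ≤ R.card ∧ ∀ i ∈ R, s i ≤ T) →
      ∀ p ∈ N \ F, enter p ≤ T + Δ)
    -- the first correct entry at time t requires f+1 correct sends by t - Δ
    (hfirst : τ + Δ ≤ t) :
    (∀ p ∈ N \ F, enter p ≤ τ + 2 * Δ) ∧ τ + 2 * Δ ≤ t + Δ := by
  have hcard : 2 * f + 1 ≤ (N \ F).card := by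
    have := Finset.card_sdiff_of_subset hF
    omega
  have hall : ∀ p ∈ N \ F, s p ≤ τ + Δ := hsendRule τ hsent
  constructor
  · intro p hp
    have := henterRule (τ + Δ) ⟨N \ F, le_refl _, hcard, hall⟩ p hp
    linarith
  · linarith
end
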